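/- Let N=(V,E,s,t) be a unit-capacity point-to-point network, F a k-CF of N, and 1 ≤ m ≤ k−1. Then there exists F' ⊆ F such that F' is an m-CF of N and F \ F' is a (k−m)-CF of the network N\F'. -/

import Mathlib

/-- A point-to-point network: a finite directed multigraph with edge set
`edges`, endpoint maps `tail`/`head`, source `s` and sink `t`; every edge has
unit capacity. -/
structure Network (V : Type) (ε : Type) where
  edges : Finset ε
  tail : ε → V
  head : ε → V
  s : V
  t : V

namespace Network

variable {V ε : Type} [DecidableEq ε]

/-- `p` is a nonempty directed walk from `u` to `v` using edges of `N`. -/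
def IsWalk (N : Network V ε) (u v : V) (p : List ε) : Prop :=
  p ≠ [] ∧ (∀ e ∈ p, e ∈ N.edges) ∧
  (∀ i, ∀ h : i + 1 < p.length,
    N.head (p.get ⟨i, Nat.lt_of_succ_lt h⟩) = N.tail (p.get ⟨i + 1, h⟩)) ∧
  (∀ h : 0 < p.length, N.tail (p.get ⟨0, h⟩) = u) ∧
  (∀ h : 0 < p.length, N.head (p.get ⟨p.length - 1, Nat.sub_lt h Nat.one_pos⟩) = v)

/-- An `s`-`t` path: an edge-simple walk from the source to the sink. -/
def IsPath (N : Network V ε) (p : List ε) : Prop :=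
  N.IsWalk N.s N.t p ∧ p.Nodup

/-- `v` is reachable from `u` by a directed walk (or `u = v`). -/
def Reach (N : Network V ε) (u v : V) : Prop :=
  u = v ∨ ∃ p, N.IsWalk u v p

/-- Reachability within the subgraph induced by the vertex set `S`. -/
def ReachIn (N : Network V ε) (S : Set V) (u v : V) : Prop :=
  u = v ∨ ∃ p, N.IsWalk u v p ∧ ∀ e ∈ p, N.tail e ∈ S ∧ N.head e ∈ S

/-- An edge-simple directed cycle. -/
def IsCycle (N : Network V ε) (p : List ε) : Prop :=
  ∃ u, N.IsWalk u u p ∧ p.Nodup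

def Acyclic (N : Network V ε) : Prop := ∀ p, ¬ N.IsCycle p

/-- A collection of pairwise edge-disjoint `s`-`t` paths (an integral flow in a
unit-capacity network). -/
def IsFlowList (N : Network V ε) (fs : List (List ε)) : Prop :=
  (∀ p ∈ fs, N.IsPath p) ∧ fs.Pairwise fun p q => ∀ e ∈ p, e ∉ q

def HasFlow (N : Network V ε) (n : ℕ) : Prop :=
  ∃ fs, N.IsFlowList fs ∧ fs.length = n

/-- The maximum-flow value `C_N(s,t)`: the maximum number of pairwise
edge-disjoint directed `s`-`t` paths. -/
noncomputable def maxFlow (N : Network V ε) : ℕ :=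
  sSup {n | N.HasFlow n}

/-- Delete the edges of `F` from the network. -/
def del (N : Network V ε) (F : Finset ε) : Network V ε :=
  { N with edges := N.edges \ F }

/-- `F` is a `k`-th order capacity factor of `N`:
`C_{N\F} ≤ C_N − k`, and `C_{N\F'} > C_N − k` for every proper `F' ⊊ F`. -/
def IsKCF (N : Network V ε) (k : ℕ) (F : Finset ε) : Prop :=
  F.Nonempty ∧ F ⊆ N.edges ∧ (N.del F).maxFlow + k ≤ N.maxFlow ∧
    ∀ F' ⊂ F, N.maxFlow < (N.del F').maxFlow + k

/-- `F` is a capacity factor of `N`: deleting `F` decreases the maximum flow,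
while deleting any proper subset does not. -/
def IsCF (N : Network V ε) (F : Finset ε) : Prop :=
  F.Nonempty ∧ F ⊆ N.edges ∧ (N.del F).maxFlow < N.maxFlow ∧
    ∀ F' ⊂ F, (N.del F').maxFlow = N.maxFlow

/-- The set of edges used by a flow given as a list of paths. -/
def usedEdges (fs : List (List ε)) : Finset ε := fs.flatten.toFinset

/-- Residual network w.r.t. a set of used (unit-capacity) edges: used edges
are reversed, unused edges keep their direction. -/
def residual (N : Network V ε) (used : Finset ε) : Network V ε :=
  { edges := N.edges,
    tail := fun e => if e ∈ used then N.head e else N.tail e,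
    head := fun e => if e ∈ used then N.tail e else N.head e,
    s := N.s, t := N.t }

/-- The same network with sink replaced by `v`. -/
def withSink (N : Network V ε) (v : V) : Network V ε := { N with t := v }

end Network

open Network


/-!
Deleting a single edge lowers a unit-capacity maximum flow by at most one, since at most one
path of an edge-disjoint family uses it. Take `F' ⊆ F` inclusion-minimal among the edge sets whose
deletion lowers the maximum flow by at least `m` (`F` itself is one, as `m < k`). Removing one edge
from `F'` then leaves a drop below `m`, so the drop of `F'` is exactly `m`; hence `F'` is an `m`-CF
and `F' ≠ F`. In `N \ F'` the maximum flow is `C_N − m`, so deleting `F \ F'` there lowers it by at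
least `k − m`, and a proper subset `G` of `F \ F'` gives a proper subset `F' ∪ G` of `F`, whose drop
is below `k`.
-/

namespace List

lemma length_filter_le_one_of_pairwise {α : Type*} {R : α → α → Prop} {p : α → Bool}
    {l : List α} (hl : l.Pairwise R) (h : ∀ a b, p a → p b → ¬ R a b) :
    (l.filter p).length ≤ 1 := by
  induction l with
  | nil => simp
  | cons a l ih =>
    obtain ⟨hRa, hl⟩ := List.pairwise_cons.mp hl
    by_cases hpa : p a
    · have hnil : l.filter p = [] :=
        List.filter_eq_nil_iff.mpr fun b hb hpb => h a b hpa hpb (hRa b hb)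
      simp [List.filter_cons_of_pos hpa, hnil]
    · rw [List.filter_cons_of_neg hpa]
      exact ih hl

end List

namespace Network

variable {V ε : Type} [DecidableEq ε]

lemma del_del (N : Network V ε) (A B : Finset ε) : (N.del A).del B = N.del (A ∪ B) := by
  simp [del, sdiff_sdiff_left]

lemma del_empty (N : Network V ε) : N.del ∅ = N := by
  cases N; simp [del]

lemma IsFlowList.length_le_card {N : Network V ε} {fs : List (List ε)} (h : N.IsFlowList fs) :
    fs.length ≤ N.edges.card := by
  have hnd : fs.flatten.Nodup :=
    List.nodup_flatten.mpr ⟨fun p hp => (h.1 p hp).2, h.2.imp fun hpq e he => hpq e he⟩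
  calc fs.length ≤ (fs.map List.length).sum := by
        rw [← List.length_map (f := List.length)]
        refine List.length_le_sum_of_one_le _ ?_
        simp only [List.mem_map]
        rintro _ ⟨p, hp, rfl⟩
        exact List.length_pos_iff.mpr (h.1 p hp).1.1
    _ = fs.flatten.toFinset.card := by rw [List.toFinset_card_of_nodup hnd, List.length_flatten]
    _ ≤ N.edges.card := Finset.card_le_card fun e he => by
        obtain ⟨p, hp, hep⟩ := List.mem_flatten.mp (List.mem_toFinset.mp he)
        exact (h.1 p hp).1.2.1 e hep

lemma bddAbove_hasFlow (N : Network V ε) : BddAbove {n | N.HasFlow n} :=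
  ⟨N.edges.card, by rintro _ ⟨fs, hfs, rfl⟩; exact hfs.length_le_card⟩

lemma hasFlow_maxFlow (N : Network V ε) : N.HasFlow N.maxFlow :=
  Nat.sSup_mem (s := {n | N.HasFlow n}) ⟨0, [], ⟨by simp, List.Pairwise.nil⟩, rfl⟩
    N.bddAbove_hasFlow

lemma le_maxFlow {N : Network V ε} {n : ℕ} (h : N.HasFlow n) : n ≤ N.maxFlow :=
  le_csSup N.bddAbove_hasFlow h

lemma IsFlowList.filter_not_mem {N : Network V ε} {fs : List (List ε)} (h : N.IsFlowList fs)
    (e : ε) : (N.del {e}).IsFlowList (fs.filter (e ∉ ·)) := by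
  refine ⟨fun p hp => ?_, h.2.sublist List.filter_sublist⟩
  obtain ⟨hp, hep⟩ := List.mem_filter.mp hp
  obtain ⟨⟨hne, hE, hchain, hs, ht⟩, hnd⟩ := h.1 p hp
  refine ⟨⟨hne, fun x hx => ?_, hchain, hs, ht⟩, hnd⟩
  simp only [del, Finset.mem_sdiff, Finset.mem_singleton]
  exact ⟨hE x hx, by rintro rfl; simp_all⟩

lemma maxFlow_le_maxFlow_del_singleton_add_one (N : Network V ε) (e : ε) :
    N.maxFlow ≤ (N.del {e}).maxFlow + 1 := by
  obtain ⟨fs, hfs, hlen⟩ := N.hasFlow_maxFlow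
  have havoid : (fs.filter (e ∉ ·)).length ≤ (N.del {e}).maxFlow :=
    le_maxFlow ⟨_, hfs.filter_not_mem e, rfl⟩
  have hthrough : (fs.filter fun p => !decide (e ∉ p)).length ≤ 1 :=
    List.length_filter_le_one_of_pairwise hfs.2 fun p q hp hq hpq =>
      hpq e (by simpa using hp) (by simpa using hq)
  have := fs.length_eq_length_filter_add (e ∉ ·)
  omega

lemma maxFlow_del_erase_le (N : Network V ε) {A : Finset ε} {e : ε} (he : e ∈ A) :
    (N.del (A.erase e)).maxFlow ≤ (N.del A).maxFlow + 1 := by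
  have h := (N.del (A.erase e)).maxFlow_le_maxFlow_del_singleton_add_one e
  rwa [del_del, Finset.union_comm, ← Finset.insert_eq, Finset.insert_erase he] at h

def LowersBy (N : Network V ε) (m : ℕ) (A : Finset ε) : Prop :=
  (N.del A).maxFlow + m ≤ N.maxFlow

lemma maxFlow_del_add_eq_of_minimal {N : Network V ε} {m : ℕ} (hm : 1 ≤ m) {A : Finset ε}
    (hA : Minimal (N.LowersBy m) A) : (N.del A).maxFlow + m = N.maxFlow := by
  have hdrop : (N.del A).maxFlow + m ≤ N.maxFlow := hA.prop
  obtain ⟨e, he⟩ : A.Nonempty := by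
    rw [Finset.nonempty_iff_ne_empty]
    rintro rfl
    rw [del_empty] at hdrop
    omega
  have hlt : N.maxFlow < (N.del (A.erase e)).maxFlow + m :=
    not_le.mp (hA.not_prop_of_lt (Finset.erase_ssubset he))
  have := N.maxFlow_del_erase_le he
  omega

lemma isKCF_of_minimal {N : Network V ε} {m : ℕ} (hm : 1 ≤ m) {A : Finset ε}
    (hA : Minimal (N.LowersBy m) A) (hAE : A ⊆ N.edges) : N.IsKCF m A := by
  refine ⟨Finset.nonempty_iff_ne_empty.mpr ?_, hAE, hA.prop,
    fun B hB => not_le.mp (hA.not_prop_of_lt hB)⟩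
  rintro rfl
  have := maxFlow_del_add_eq_of_minimal hm hA
  rw [del_empty] at this
  omega

lemma isKCF_del_sdiff {N : Network V ε} {k m : ℕ} {F A : Finset ε} (hF : N.IsKCF k F)
    (hAF : A ⊆ F) (hmk : m < k) (hA : (N.del A).maxFlow + m = N.maxFlow) :
    (N.del A).IsKCF (k - m) (F \ A) := by
  obtain ⟨-, hFE, hFk, hFmin⟩ := hF
  have hrest : (N.del A).del (F \ A) = N.del F := by
    rw [del_del, Finset.union_sdiff_of_subset hAF]
  refine ⟨Finset.nonempty_iff_ne_empty.mpr fun hFA => ?_, ?_, ?_, fun G hG => ?_⟩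
  · rw [Finset.sdiff_eq_empty_iff_subset] at hFA
    rw [Finset.Subset.antisymm hAF hFA] at hA
    omega
  · exact fun e he => Finset.mem_sdiff.mpr
      ⟨hFE (Finset.mem_sdiff.mp he).1, (Finset.mem_sdiff.mp he).2⟩
  · rw [hrest]
    omega
  · have hAG : A ∪ G ⊂ F := by
      refine Finset.ssubset_iff_subset_ne.mpr
        ⟨Finset.union_subset hAF (hG.subset.trans Finset.sdiff_subset), fun hAGF => ?_⟩
      have : F \ A ⊆ G := by
        rw [← hAGF, Finset.union_sdiff_left]
        exact Finset.sdiff_subset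
      exact hG.not_subset this
    have := hFmin _ hAG
    rw [del_del]
    omega

end Network

/-- Any `k`-CF splits into an `m`-CF of `N` and a `(k−m)`-CF of the network
with the former deleted. -/
theorem kCF_decompose {V ε : Type} [DecidableEq ε]
    (N : Network V ε) (k m : ℕ) (F : Finset ε)
    (hF : N.IsKCF k F) (hm1 : 1 ≤ m) (hm2 : m ≤ k - 1) :
    ∃ F' ⊆ F, N.IsKCF m F' ∧ (N.del F').IsKCF (k - m) (F \ F') := by
  have hmk : m < k := by omega
  have hFm : N.LowersBy m F := le_trans (by omega) hF.2.2.1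
  obtain ⟨F', hF'F, hmin⟩ := exists_minimal_le_of_wellFoundedLT (N.LowersBy m) F hFm
  exact ⟨F', hF'F, isKCF_of_minimal hm1 hmin (hF'F.trans hF.2.1),
    isKCF_del_sdiff hF hF'F hmk (maxFlow_del_add_eq_of_minimal hm1 hmin)⟩
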